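/- Let f :⊆ A ⇉ B and g :⊆ C ⇉ D be partial multivalued functions between represented spaces. Then f ≤_W^c g if and only if there exist continuous partial multivalued functions k :⊆ A ⇉ ℕ^ℕ × C and h :⊆ ℕ^ℕ × D ⇉ B such that h ∘ (id_{ℕ^ℕ} × g) ∘ k ⪯ f. -/

import Mathlib

open Filter Topology

/-! ### Partial functions on Baire space -/

/-- A partial function on Baire space, given by a domain and an underlying total
function (whose values outside the domain are irrelevant). -/
structure PFunB where
  dom : Set (ℕ → ℕ)
  toFun : (ℕ → ℕ) → (ℕ → ℕ)

/-- A partial function on Baire space is continuous if its underlying function is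
continuous on its domain. -/
def PFunB.IsContinuous (F : PFunB) : Prop := ContinuousOn F.toFun F.dom

/-- Composition of partial functions on Baire space. -/
def PFunB.comp (F G : PFunB) : PFunB where
  dom := {p | p ∈ G.dom ∧ G.toFun p ∈ F.dom}
  toFun := fun p => F.toFun (G.toFun p)

/-- A partial function from (Baire space) × (Baire space) to Baire space. -/
structure PFunB2 where
  dom : Set ((ℕ → ℕ) × (ℕ → ℕ))
  toFun : (ℕ → ℕ) × (ℕ → ℕ) → (ℕ → ℕ)

def PFunB2.IsContinuous (K : PFunB2) : Prop := ContinuousOn K.toFun K.dom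

/-! ### Coding of sequences -/

/-- The `n`-th column of `p : ℕ → ℕ`, via the standard pairing bijection. -/
def col (p : ℕ → ℕ) (n : ℕ) : ℕ → ℕ := fun k => p (Nat.pair n k)

/-- Interleaving pairing of two elements of Baire space. -/
def pairB (p q : ℕ → ℕ) : ℕ → ℕ := fun n => if n % 2 = 0 then p (n / 2) else q (n / 2)

def leftB (r : ℕ → ℕ) : ℕ → ℕ := fun n => r (2 * n)

def rightB (r : ℕ → ℕ) : ℕ → ℕ := fun n => r (2 * n + 1)

theorem leftB_pairB (p q : ℕ → ℕ) : leftB (pairB p q) = p := by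
  funext n
  show (if (2 * n) % 2 = 0 then p ((2 * n) / 2) else q ((2 * n) / 2)) = p n
  rw [if_pos (by omega)]
  congr 1
  omega

theorem rightB_pairB (p q : ℕ → ℕ) : rightB (pairB p q) = q := by
  funext n
  show (if (2 * n + 1) % 2 = 0 then p ((2 * n + 1) / 2) else q ((2 * n + 1) / 2)) = q n
  rw [if_neg (by omega)]
  congr 1
  omega

/-! ### Represented spaces -/

/-- A represented space: a set `X` together with a partial surjection from Baire space
onto `X` (modelled as a total map together with a domain, such that every point has a
name in the domain). -/
structure RepSpace (X : Type u) where
  dom : Set (ℕ → ℕ)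
  map : (ℕ → ℕ) → X
  surj : ∀ x : X, ∃ p ∈ dom, map p = x

/-- Baire space with the identity representation. -/
def idRep : RepSpace (ℕ → ℕ) := ⟨Set.univ, id, fun x => ⟨x, trivial, rfl⟩⟩

/-- The representation of `X`, viewed as a partial multivalued function from Baire
space to `X` (with empty value outside the domain). -/
def RepSpace.toMV {X : Type u} (δ : RepSpace X) : (ℕ → ℕ) → Set X :=
  fun p => {x | p ∈ δ.dom ∧ δ.map p = x}

/-- Product of represented spaces, via the interleaving pairing homeomorphism. -/
def RepSpace.prod {X : Type u} {Y : Type v} (δX : RepSpace X) (δY : RepSpace Y) :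
    RepSpace (X × Y) where
  dom := {r | leftB r ∈ δX.dom ∧ rightB r ∈ δY.dom}
  map := fun r => (δX.map (leftB r), δY.map (rightB r))
  surj := by
    rintro ⟨x, y⟩
    obtain ⟨p, hp, hpx⟩ := δX.surj x
    obtain ⟨q, hq, hqy⟩ := δY.surj y
    refine ⟨pairB p q, ⟨?_, ?_⟩, ?_⟩
    · rw [leftB_pairB]; exact hp
    · rw [rightB_pairB]; exact hq
    · show (δX.map (leftB (pairB p q)), δY.map (rightB (pairB p q))) = (x, y)
      rw [leftB_pairB, rightB_pairB, hpx, hqy]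

/-- The represented space of sequences in `X`: `δ(p) = (δ_X((p)_n))_n`. -/
def RepSpace.seq {X : Type u} (δ : RepSpace X) : RepSpace (ℕ → X) where
  dom := {p | ∀ n, col p n ∈ δ.dom}
  map := fun p n => δ.map (col p n)
  surj := by
    intro x
    choose q hq hmap using fun n => δ.surj (x n)
    have hcol : ∀ n, col (fun m => q (Nat.unpair m).1 (Nat.unpair m).2) n = q n := by
      intro n; funext k; simp [col]
    refine ⟨fun m => q (Nat.unpair m).1 (Nat.unpair m).2, fun n => ?_, ?_⟩
    · rw [hcol]; exact hq n
    · funext n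
      show δ.map (col (fun m => q (Nat.unpair m).1 (Nat.unpair m).2) n) = x n
      rw [hcol]; exact hmap n

/-! ### Partial multivalued functions -/

/-- Composition of partial multivalued functions (with the domain convention
`dom (f ∘ g) = {x ∈ dom g : g x ⊆ dom f}`; a partial multivalued function is modelled
as a `Set`-valued function whose domain is the set of points with nonempty value). -/
def MComp {X : Type u} {Y : Type v} {Z : Type w} (f : Y → Set Z) (g : X → Set Y) :
    X → Set Z :=
  fun x => {z | (∀ y ∈ g x, (f y).Nonempty) ∧ ∃ y ∈ g x, z ∈ f y}

/-- `f` tightens `g`: `dom g ⊆ dom f` and `f x ⊆ g x` for every `x ∈ dom g`. -/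
def Tightens {X : Type u} {Y : Type v} (f g : X → Set Y) : Prop :=
  ∀ x, (g x).Nonempty → (f x).Nonempty ∧ f x ⊆ g x

/-- `F` is a realizer of the partial multivalued function `f`. -/
def Realizes {X : Type u} {Y : Type v} (δX : RepSpace X) (δY : RepSpace Y)
    (F : PFunB) (f : X → Set Y) : Prop :=
  ∀ p ∈ δX.dom, (f (δX.map p)).Nonempty →
    p ∈ F.dom ∧ F.toFun p ∈ δY.dom ∧ δY.map (F.toFun p) ∈ f (δX.map p)

/-- A partial multivalued function between represented spaces is continuous if it has a
continuous realizer. -/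
def MCts {X : Type u} {Y : Type v} (δX : RepSpace X) (δY : RepSpace Y)
    (f : X → Set Y) : Prop :=
  ∃ F : PFunB, F.IsContinuous ∧ Realizes δX δY F f

/-- Strong continuous Weihrauch reducibility `f ≤_sW^c g`. -/
def StrongWc {A : Type u} {B : Type v} {C : Type w} {D : Type x}
    (δA : RepSpace A) (δB : RepSpace B) (δC : RepSpace C) (δD : RepSpace D)
    (f : A → Set B) (g : C → Set D) : Prop :=
  ∃ K H : PFunB, K.IsContinuous ∧ H.IsContinuous ∧
    ∀ G : PFunB, Realizes δC δD G g → Realizes δA δB (K.comp (G.comp H)) f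

/-- Continuous Weihrauch reducibility `f ≤_W^c g`. -/
def Wc {A : Type u} {B : Type v} {C : Type w} {D : Type x}
    (δA : RepSpace A) (δB : RepSpace B) (δC : RepSpace C) (δD : RepSpace D)
    (f : A → Set B) (g : C → Set D) : Prop :=
  ∃ (K : PFunB2) (H : PFunB), K.IsContinuous ∧ H.IsContinuous ∧
    ∀ G : PFunB, Realizes δC δD G g →
      Realizes δA δB
        ⟨{p | p ∈ H.dom ∧ H.toFun p ∈ G.dom ∧ (p, G.toFun (H.toFun p)) ∈ K.dom},
          fun p => K.toFun (p, G.toFun (H.toFun p))⟩ f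

/-- Continuous Weihrauch equivalence `f ≡_W^c g`. -/
def WcEquiv {A : Type u} {B : Type v} {C : Type w} {D : Type x}
    (δA : RepSpace A) (δB : RepSpace B) (δC : RepSpace C) (δD : RepSpace D)
    (f : A → Set B) (g : C → Set D) : Prop :=
  Wc δA δB δC δD f g ∧ Wc δC δD δA δB g f

/-- `id_{ℕ^ℕ} × g` for a partial multivalued `g`. -/
def idProd {C : Type u} {D : Type v} (g : C → Set D) :
    (ℕ → ℕ) × C → Set ((ℕ → ℕ) × D) :=
  fun pc => {qd | qd.1 = pc.1 ∧ qd.2 ∈ g pc.2}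

/-- `f` is a cylinder if `id_{ℕ^ℕ} × f ≤_sW^c f`. -/
def IsCylinder {X : Type u} {Y : Type v} (δX : RepSpace X) (δY : RepSpace Y)
    (f : X → Set Y) : Prop :=
  StrongWc (idRep.prod δX) (idRep.prod δY) δX δY (idProd f) f

/-- `T :⊆ X ⇉ Y` is transparent: for every continuous `g :⊆ Y ⇉ Y` there is a
continuous `f :⊆ X ⇉ X` with `T ∘ f ⪯ g ∘ T`. -/
def Transparent {X : Type u} {Y : Type v} (δX : RepSpace X) (δY : RepSpace Y)
    (T : X → Set Y) : Prop :=
  ∀ g : Y → Set Y, MCts δY δY g →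
    ∃ f : X → Set X, MCts δX δX f ∧ Tightens (MComp T f) (MComp g T)

/-- `ζ :⊆ Y ⇉ ℕ^ℕ` is a probe for `Y`: it is continuous, and for every continuous
`f :⊆ Y ⇉ ℕ^ℕ` there is a continuous `e :⊆ Y ⇉ Y` with `ζ ∘ e ⪯ f`. -/
def IsProbe {Y : Type u} (δY : RepSpace Y) (ζ : Y → Set (ℕ → ℕ)) : Prop :=
  MCts δY idRep ζ ∧
    ∀ f : Y → Set (ℕ → ℕ), MCts δY idRep f →
      ∃ e : Y → Set Y, MCts δY δY e ∧ Tightens (MComp ζ e) f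

/-- Parallelization of a partial multivalued function. -/
def Parallel {X : Type u} {Y : Type v} (f : X → Set Y) : (ℕ → X) → Set (ℕ → Y) :=
  fun xs => {ys | ∀ n, ys n ∈ f (xs n)}

/-! ### Games -/

/-- A strategy for player II: to each finite sequence of I's moves it assigns a natural
number or a pass (`none`). -/
abbrev Strategy := List ℕ → Option ℕ

/-- The move of player II (following `σ`) after I has played `x 0, …, x n`. -/
def respond (σ : Strategy) (x : ℕ → ℕ) (n : ℕ) : Option ℕ :=
  σ (List.ofFn fun i : Fin (n + 1) => x i)

/-- Player II plays natural numbers at infinitely many rounds of the run against `x`. -/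
def InfPlays (σ : Strategy) (x : ℕ → ℕ) : Prop :=
  {n | (respond σ x n).isSome = true}.Infinite

/-- The element of Baire space built by player II in the run against `x`
(the subsequence of her non-pass moves). -/
noncomputable def output (σ : Strategy) (x : ℕ → ℕ) : ℕ → ℕ :=
  fun k => (respond σ x (Nat.nth (fun n => (respond σ x n).isSome = true) k)).getD 0

/-- The partial multivalued function `δ_B ∘ ζ ∘ T ∘ δ_X :⊆ ℕ^ℕ ⇉ B` used in the winning
condition of the `(ζ, T)`-Wadge game. -/
def GameMap {X : Type u} {Y : Type v} {B : Type w} (δX : RepSpace X) (δB : RepSpace B)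
    (ζ : Y → Set (ℕ → ℕ)) (T : X → Set Y) : (ℕ → ℕ) → Set B :=
  MComp δB.toMV (MComp ζ (MComp T δX.toMV))

/-- `σ` is a winning strategy for player II in the `(ζ, T)`-Wadge game for `f`:
for every run `x` built by player I with `x ∈ dom (f ∘ δ_A)`, player II plays natural
numbers infinitely often, her output `y` lies in `dom (δ_B ∘ ζ ∘ T ∘ δ_X)`, and
`(δ_B ∘ ζ ∘ T ∘ δ_X)(y) ⊆ (f ∘ δ_A)(x)` (runs with `x ∉ dom (f ∘ δ_A)` are won by II
automatically). -/
def WadgeWinning {X : Type u} {Y : Type v} {A : Type w} {B : Type x}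
    (δX : RepSpace X) (δA : RepSpace A) (δB : RepSpace B)
    (ζ : Y → Set (ℕ → ℕ)) (T : X → Set Y) (f : A → Set B) (σ : Strategy) : Prop :=
  ∀ x : ℕ → ℕ, (MComp f δA.toMV x).Nonempty →
    InfPlays σ x ∧
    (GameMap δX δB ζ T (output σ x)).Nonempty ∧
    GameMap δX δB ζ T (output σ x) ⊆ MComp f δA.toMV x

/-! ### lim, isFinite and the Baire hierarchy -/

/-- The partial function `lim :⊆ ℕ^ℕ → ℕ^ℕ`, `lim(p) = lim_n (p)_n` (pointwise limit),
viewed as a partial multivalued function with singleton values on its domain. -/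
def limFn : (ℕ → ℕ) → Set (ℕ → ℕ) :=
  fun p => {q | ∀ k, ∀ᶠ n in atTop, col p n k = q k}

/-- The space `{0,1}^ℕ` of binary sequences. -/
abbrev BSeq : Type := {p : ℕ → ℕ // ∀ n, p n ≤ 1}

/-- `{0,1}^ℕ` with the identity representation (as a subspace of Baire space). -/
def repBSeq : RepSpace BSeq where
  dom := {p | ∀ n, p n ≤ 1}
  map := fun p => ⟨fun n => min (p n) 1, fun _ => min_le_right _ _⟩
  surj := fun x => ⟨x.1, x.2, Subtype.ext (funext fun n => min_eq_left (x.2 n))⟩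

/-- The two-point space `{0,1}`. -/
abbrev TwoPt : Type := {n : ℕ // n ≤ 1}

/-- The two-point space `{0,1}` represented by `δ(p) = p 0`. -/
def repTwo : RepSpace TwoPt where
  dom := {p | p 0 ≤ 1}
  map := fun p => ⟨min (p 0) 1, min_le_right _ _⟩
  surj := fun x => ⟨fun _ => x.1, x.2, Subtype.ext (min_eq_left x.2)⟩

open Classical in
/-- `isFinite(p) = 1` iff `{n : p n = 1}` is finite. -/
noncomputable def isFinite : BSeq → TwoPt :=
  fun p => if {n | p.1 n = 1}.Finite then ⟨1, le_refl 1⟩ else ⟨0, Nat.zero_le 1⟩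

/-- The finite levels of the Baire hierarchy: Baire class 0 functions are the continuous
ones, and Baire class `n+1` functions are pointwise limits of sequences of Baire class
`n` functions. -/
def BaireClass : ℕ → ((ℕ → ℕ) → (ℕ → ℕ)) → Prop
  | 0, f => Continuous f
  | n + 1, f => ∃ g : ℕ → (ℕ → ℕ) → (ℕ → ℕ),
      (∀ k, BaireClass n (g k)) ∧ ∀ x, Tendsto (fun k => g k x) atTop (𝓝 (f x))

/-! For `(⇒)`, let `k` send `a ∈ dom f` to the pairs `(p, δ_C(H p))` with `p` a name of `a`,
and let `h` send `(p, d)` to the points `δ_B(K(p, q))` with `q` a name of `d`. The reduction has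
to succeed against every realizer of `g`, in particular against one that answers the instance
`H p` with an arbitrary name `q` of an arbitrary solution `d`; hence `K` succeeds on all such
pairs, which is exactly `h ∘ (id × g) ∘ k ⪯ f`. For `(⇐)`, compose realizers `F_k`, `F_h` of
`k`, `h` with a realizer of `id × g`: take `H = right ∘ F_k` and
`K(p, q) = F_h⟨left (F_k p), q⟩`. -/

theorem continuous_leftB : Continuous leftB := continuous_pi fun _ => continuous_apply _

theorem continuous_rightB : Continuous rightB := continuous_pi fun _ => continuous_apply _

theorem continuous_pairB : Continuous fun r : (ℕ → ℕ) × (ℕ → ℕ) => pairB r.1 r.2 :=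
  continuous_pi fun n => by
    by_cases h : n % 2 = 0 <;> simp only [pairB, h, if_true, if_false] <;> fun_prop

theorem RepSpace.prod_map_pairB {X : Type u} {Y : Type v} (δX : RepSpace X)
    (δY : RepSpace Y) (p q : ℕ → ℕ) :
    (δX.prod δY).map (pairB p q) = (δX.map p, δY.map q) := by
  simp only [RepSpace.prod, leftB_pairB, rightB_pairB]

theorem RepSpace.pairB_mem_prod_dom {X : Type u} {Y : Type v} {δX : RepSpace X}
    {δY : RepSpace Y} {p q : ℕ → ℕ} :
    pairB p q ∈ (δX.prod δY).dom ↔ p ∈ δX.dom ∧ q ∈ δY.dom := by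
  show leftB (pairB p q) ∈ _ ∧ rightB (pairB p q) ∈ _ ↔ _
  rw [leftB_pairB, rightB_pairB]

theorem tightens_mcomp_mcomp_iff {W : Type u} {X : Type v} {Y : Type w} {Z : Type x}
    {h : Y → Set Z} {g : X → Set Y} {k : W → Set X} {f : W → Set Z} :
    Tightens (MComp h (MComp g k)) f ↔ ∀ w, (f w).Nonempty →
      (k w).Nonempty ∧ ∀ x ∈ k w, (g x).Nonempty ∧
        ∀ y ∈ g x, (h y).Nonempty ∧ h y ⊆ f w := by
  constructor
  · intro htight w hw
    obtain ⟨⟨z, hz_dom, y, ⟨hg_dom, x, hx, hy⟩, -⟩, hsub⟩ := htight w hw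
    refine ⟨⟨x, hx⟩, fun x' hx' => ⟨hg_dom x' hx', fun y' hy' => ?_⟩⟩
    have hy'_mem : y' ∈ MComp g k w := ⟨hg_dom, x', hx', hy'⟩
    exact ⟨hz_dom y' hy'_mem, fun z' hz' => hsub ⟨hz_dom, y', hy'_mem, hz'⟩⟩
  · intro hspec w hw
    obtain ⟨⟨x, hx⟩, hx_spec⟩ := hspec w hw
    obtain ⟨y, hy⟩ := (hx_spec x hx).1
    obtain ⟨z, hz⟩ := ((hx_spec x hx).2 y hy).1
    have hh_dom : ∀ y ∈ MComp g k w, (h y).Nonempty := by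
      rintro y ⟨-, x', hx', hy'⟩
      exact ((hx_spec x' hx').2 y hy').1
    refine ⟨⟨z, hh_dom, y, ⟨fun x' hx' => (hx_spec x' hx').1, x, hx, hy⟩, hz⟩, ?_⟩
    rintro z' ⟨-, y', ⟨-, x', hx', hy'⟩, hz'⟩
    exact ((hx_spec x' hx').2 y' hy').2 hz'

section Realizers

variable {X : Type u} {Y : Type v} {Z : Type w} {δX : RepSpace X} {δY : RepSpace Y}
  {δZ : RepSpace Z}

theorem exists_realizes (δX : RepSpace X) (δY : RepSpace Y) (f : X → Set Y) :
    ∃ F : PFunB, F.dom = {p | p ∈ δX.dom ∧ (f (δX.map p)).Nonempty} ∧ Realizes δX δY F f := by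
  have hname : ∀ p, ∃ q, (f (δX.map p)).Nonempty → q ∈ δY.dom ∧ δY.map q ∈ f (δX.map p) := by
    intro p
    by_cases hp : (f (δX.map p)).Nonempty
    · obtain ⟨y, hy⟩ := hp
      obtain ⟨q, hq, rfl⟩ := δY.surj y
      exact ⟨q, fun _ => ⟨hq, hy⟩⟩
    · exact ⟨p, fun h => absurd h hp⟩
  choose F hF using hname
  exact ⟨⟨_, F⟩, rfl, fun p hp hne => ⟨⟨hp, hne⟩, hF p hne⟩⟩

open Classical in
theorem Realizes.update {F : PFunB} {f : X → Set Y} (hF : Realizes δX δY F f) {p q : ℕ → ℕ}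
    (hq : q ∈ δY.dom) (hqp : δY.map q ∈ f (δX.map p)) :
    Realizes δX δY ⟨F.dom, Function.update F.toFun p q⟩ f := by
  intro p' hp' hne
  obtain ⟨hdom, hcod, hval⟩ := hF p' hp' hne
  refine ⟨hdom, ?_⟩
  by_cases hpp' : p' = p
  · subst hpp'
    simpa only [Function.update_self] using And.intro hq hqp
  · simpa only [Function.update_of_ne hpp'] using And.intro hcod hval

theorem Realizes.mono {F F' : PFunB} {f : X → Set Y} (hF : Realizes δX δY F f)
    (hdom : F.dom ⊆ F'.dom) (hfun : Set.EqOn F'.toFun F.toFun F.dom) :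
    Realizes δX δY F' f := by
  intro p hp hne
  obtain ⟨hpF, hcod, hval⟩ := hF p hp hne
  rw [hfun hpF]
  exact ⟨hdom hpF, hcod, hval⟩

theorem Realizes.of_tightens {F : PFunB} {f f' : X → Set Y} (hF : Realizes δX δY F f')
    (htight : Tightens f' f) : Realizes δX δY F f := by
  intro p hp hne
  obtain ⟨hpF, hcod, hval⟩ := hF p hp (htight _ hne).1
  exact ⟨hpF, hcod, (htight _ hne).2 hval⟩

theorem Realizes.mcomp {F G : PFunB} {f : Y → Set Z} {g : X → Set Y}
    (hF : Realizes δY δZ F f) (hG : Realizes δX δY G g) :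
    Realizes δX δZ (F.comp G) (MComp f g) := by
  rintro p hp ⟨-, hf_dom, y, hy, -⟩
  obtain ⟨hpG, hGp, hGval⟩ := hG p hp ⟨y, hy⟩
  obtain ⟨hGpF, hcod, hval⟩ := hF (G.toFun p) hGp (hf_dom _ hGval)
  exact ⟨⟨hpG, hGpF⟩, hcod, hf_dom, _, hGval, hval⟩

theorem Realizes.idProd {G : PFunB} {g : X → Set Y} (hG : Realizes δX δY G g) :
    Realizes (idRep.prod δX) (idRep.prod δY)
      ⟨{r | rightB r ∈ G.dom}, fun r => pairB (leftB r) (G.toFun (rightB r))⟩ (idProd g) := by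
  rintro r ⟨-, hr⟩ ⟨_, -, hd⟩
  obtain ⟨hrG, hcod, hval⟩ := hG (rightB r) hr ⟨_, hd⟩
  refine ⟨hrG, RepSpace.pairB_mem_prod_dom.2 ⟨trivial, hcod⟩, ?_⟩
  rw [RepSpace.prod_map_pairB]
  exact ⟨rfl, hval⟩

end Realizers

def wcRealizer (K : PFunB2) (H G : PFunB) : PFunB :=
  ⟨{p | p ∈ H.dom ∧ H.toFun p ∈ G.dom ∧ (p, G.toFun (H.toFun p)) ∈ K.dom},
    fun p => K.toFun (p, G.toFun (H.toFun p))⟩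

section Reduction

variable {A : Type u} {B : Type v} {C : Type w} {D : Type x} {δA : RepSpace A}
  {δB : RepSpace B} {δC : RepSpace C} {δD : RepSpace D} {f : A → Set B} {g : C → Set D}
  {K : PFunB2} {H : PFunB}

theorem mem_dom_of_wcRealizer
    (hKH : ∀ G : PFunB, Realizes δC δD G g → Realizes δA δB (wcRealizer K H G) f)
    {p : ℕ → ℕ} (hp : p ∈ δA.dom) (hfp : (f (δA.map p)).Nonempty) :
    p ∈ H.dom ∧ H.toFun p ∈ δC.dom ∧ (g (δC.map (H.toFun p))).Nonempty := by
  obtain ⟨G, hG_dom, hG⟩ := exists_realizes δC δD g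
  obtain ⟨⟨hpH, hHpG, -⟩, -⟩ := hKH G hG p hp hfp
  rw [hG_dom] at hHpG
  exact ⟨hpH, hHpG⟩

theorem wcRealizer_spec
    (hKH : ∀ G : PFunB, Realizes δC δD G g → Realizes δA δB (wcRealizer K H G) f)
    {p q : ℕ → ℕ} (hp : p ∈ δA.dom) (hfp : (f (δA.map p)).Nonempty) (hq : q ∈ δD.dom)
    (hqg : δD.map q ∈ g (δC.map (H.toFun p))) :
    (p, q) ∈ K.dom ∧ K.toFun (p, q) ∈ δB.dom ∧ δB.map (K.toFun (p, q)) ∈ f (δA.map p) := by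
  obtain ⟨G, -, hG⟩ := exists_realizes δC δD g
  obtain ⟨⟨-, -, hK⟩, hcod, hval⟩ := hKH _ (hG.update hq hqg) p hp hfp
  simp only [wcRealizer, Function.update_self] at hK hcod hval
  exact ⟨hK, hcod, hval⟩

def wcInner (δA : RepSpace A) (δC : RepSpace C) (f : A → Set B) (H : PFunB) :
    A → Set ((ℕ → ℕ) × C) :=
  fun a => {pc | pc.1 ∈ δA.dom ∧ δA.map pc.1 = a ∧ (f a).Nonempty ∧ pc.2 = δC.map (H.toFun pc.1)}

/-- Restricted to the pairs `(p, d)` on which `wcRealizer_spec` applies to every name of `d`. -/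
def wcOuter (δA : RepSpace A) (δB : RepSpace B) (δC : RepSpace C) (δD : RepSpace D)
    (f : A → Set B) (g : C → Set D) (K : PFunB2) (H : PFunB) : (ℕ → ℕ) × D → Set B :=
  fun pd => {b | pd.1 ∈ δA.dom ∧ (f (δA.map pd.1)).Nonempty ∧ pd.2 ∈ g (δC.map (H.toFun pd.1)) ∧
    ∃ q ∈ δD.dom, δD.map q = pd.2 ∧ b = δB.map (K.toFun (pd.1, q))}

variable (hKH : ∀ G : PFunB, Realizes δC δD G g → Realizes δA δB (wcRealizer K H G) f)
include hKH

theorem mcts_wcInner (hH : H.IsContinuous) : MCts δA (idRep.prod δC) (wcInner δA δC f H) := by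
  refine ⟨⟨H.dom, fun p => pairB p (H.toFun p)⟩,
    continuous_pairB.comp_continuousOn (continuousOn_id.prodMk hH), ?_⟩
  rintro p hp ⟨_, -, -, hfp, -⟩
  obtain ⟨hpH, hHp, -⟩ := mem_dom_of_wcRealizer hKH hp hfp
  refine ⟨hpH, RepSpace.pairB_mem_prod_dom.2 ⟨trivial, hHp⟩, ?_⟩
  rw [RepSpace.prod_map_pairB]
  exact ⟨hp, rfl, hfp, rfl⟩

theorem mcts_wcOuter (hK : K.IsContinuous) :
    MCts (idRep.prod δD) δB (wcOuter δA δB δC δD f g K H) := by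
  refine ⟨⟨{r | (leftB r, rightB r) ∈ K.dom}, fun r => K.toFun (leftB r, rightB r)⟩,
    hK.comp (continuous_leftB.prodMk continuous_rightB).continuousOn fun _ hr => hr, ?_⟩
  rintro r ⟨-, hr⟩ ⟨_, hp, hfp, hrg, -⟩
  obtain ⟨hK_dom, hcod, -⟩ := wcRealizer_spec hKH hp hfp hr hrg
  exact ⟨hK_dom, hcod, hp, hfp, hrg, rightB r, hr, rfl, rfl⟩

theorem tightens_wcOuter_wcInner :
    Tightens (MComp (wcOuter δA δB δC δD f g K H) (MComp (idProd g) (wcInner δA δC f H))) f := by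
  refine tightens_mcomp_mcomp_iff.2 fun a hfa => ?_
  obtain ⟨p₀, hp₀, rfl⟩ := δA.surj a
  refine ⟨⟨(p₀, δC.map (H.toFun p₀)), hp₀, rfl, hfa, rfl⟩, ?_⟩
  rintro ⟨p, c⟩ ⟨hp, hpa, -, hc : c = δC.map (H.toFun p)⟩
  subst hc
  rw [← hpa] at hfa ⊢
  obtain ⟨-, -, d, hd⟩ := mem_dom_of_wcRealizer hKH hp hfa
  refine ⟨⟨(p, d), rfl, hd⟩, ?_⟩
  rintro ⟨p', d'⟩ ⟨rfl, hd'⟩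
  obtain ⟨q, hq, rfl⟩ := δD.surj d'
  refine ⟨⟨_, hp, hfa, hd', q, hq, rfl, rfl⟩, ?_⟩
  rintro b ⟨-, -, -, q', hq', hq'd, rfl⟩
  exact (wcRealizer_spec hKH hp hfa hq' (hq'd ▸ hd')).2.2

end Reduction

theorem wc_of_tightens {A : Type u} {B : Type v} {C : Type w} {D : Type x}
    {δA : RepSpace A} {δB : RepSpace B} {δC : RepSpace C} {δD : RepSpace D}
    {f : A → Set B} {g : C → Set D} {k : A → Set ((ℕ → ℕ) × C)} {h : (ℕ → ℕ) × D → Set B}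
    (hk : MCts δA (idRep.prod δC) k) (hh : MCts (idRep.prod δD) δB h)
    (htight : Tightens (MComp h (MComp (idProd g) k)) f) : Wc δA δB δC δD f g := by
  obtain ⟨Fk, hFk_cont, hFk⟩ := hk
  obtain ⟨Fh, hFh_cont, hFh⟩ := hh
  refine ⟨⟨{pq | pq.1 ∈ Fk.dom ∧ pairB (leftB (Fk.toFun pq.1)) pq.2 ∈ Fh.dom},
      fun pq => Fh.toFun (pairB (leftB (Fk.toFun pq.1)) pq.2)⟩,
    ⟨Fk.dom, fun p => rightB (Fk.toFun p)⟩, ?_, continuous_rightB.comp_continuousOn hFk_cont,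
    fun G hG => ((hFh.mcomp (hG.idProd.mcomp hFk)).of_tightens htight).mono
      (fun _ ⟨⟨hp, hG_dom⟩, hFh_dom⟩ => ⟨hp, hG_dom, hp, hFh_dom⟩) fun _ _ => rfl⟩
  have hleft : ContinuousOn (fun pq : (ℕ → ℕ) × (ℕ → ℕ) => leftB (Fk.toFun pq.1))
      {pq | pq.1 ∈ Fk.dom} :=
    continuous_leftB.comp_continuousOn (hFk_cont.comp continuous_fst.continuousOn fun _ h => h)
  exact hFh_cont.comp (continuous_pairB.comp_continuousOn
    ((hleft.mono fun _ hpq => hpq.1).prodMk continuous_snd.continuousOn)) fun _ hpq => hpq.2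

/-- `f ≤_W^c g` iff there exist continuous partial multivalued `k :⊆ A ⇉ ℕ^ℕ × C` and
`h :⊆ ℕ^ℕ × D ⇉ B` such that `h ∘ (id_{ℕ^ℕ} × g) ∘ k ⪯ f`. -/
theorem wc_iff_tightens {A B C D : Type*}
    (δA : RepSpace A) (δB : RepSpace B) (δC : RepSpace C) (δD : RepSpace D)
    (f : A → Set B) (g : C → Set D) :
    Wc δA δB δC δD f g ↔
      ∃ (k : A → Set ((ℕ → ℕ) × C)) (h : (ℕ → ℕ) × D → Set B),
        MCts δA (idRep.prod δC) k ∧ MCts (idRep.prod δD) δB h ∧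
        Tightens (MComp h (MComp (idProd g) k)) f :=
  ⟨fun ⟨_, _, hK, hH, hKH⟩ => ⟨_, _, mcts_wcInner hKH hH, mcts_wcOuter hKH hK,
      tightens_wcOuter_wcInner hKH⟩,
    fun ⟨_, _, hk, hh, htight⟩ => wc_of_tightens hk hh htight⟩
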